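/- arXiv:2411.07467 — 2 statements merged into one kernel-verified Lean document; each statement's English description precedes it below -/
import Mathlib

section
/- If Q is a quiver whose underlying graph is a tree (no parallel arrows, no 2-cycles, and the undirected support graph is acyclic and connected), then for any vertex v, the quiver obtained from Q by mutating at v has the same underlying undirected graph as Q up to reversing the arrows incident to v, provided v is a sink or a source. In particular, any orientation of a tree can be transformed into any other orientation of the same tree by a sequence of mutations at sinks or sources. -/
/-!
At a sink or a source no path of length two passes through the vertex, so mutation there only
reverses its arrows. An orientation of a forest is the quiver of a height function `h : V → ℤ`
that changes by `±1` along every edge (sum the arrows along paths from a root), and a source is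
a local minimum of `h`, where mutation raises `h` by two. Two heights of the same forest differ,
after a shift on each component, by `2 e` with `e ≥ 0`; among the vertices where `e` is maximal,
one of minimal height is always a source, so raising it decreases `∑ e` until the target is
reached.
-/

open Matrix

def mutate {n : Type*} [DecidableEq n] (B : Matrix n n ℤ) (k : n) : Matrix n n ℤ :=
  Matrix.of fun i j =>
    if i = k ∨ j = k then -B i j
    else B i j + Int.sign (B i k) * max (B i k * B k j) 0

def underlying {V : Type*} (B : Matrix V V ℤ) : SimpleGraph V :=
  SimpleGraph.fromRel fun i j => B i j ≠ 0

namespace SimpleGraph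

variable {V A : Type*} [AddCommGroup A] {G : SimpleGraph V}

def Walk.dartSum (f : V → V → A) {u v : V} (p : G.Walk u v) : A :=
  (p.darts.map fun d => f d.fst d.snd).sum

@[simp]
lemma Walk.dartSum_concat (f : V → V → A) {u v w : V} (p : G.Walk u v) (h : G.Adj v w) :
    (p.concat h).dartSum f = p.dartSum f + f v w := by
  simp [dartSum, darts_concat]

@[simp]
lemma Walk.dartSum_copy (f : V → V → A) {u v u' v' : V} (p : G.Walk u v) (hu : u = u')
    (hv : v = v') : (p.copy hu hv).dartSum f = p.dartSum f := by
  simp [dartSum]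

/-- Sum `f` along the unique path from a fixed root of each component. -/
theorem IsAcyclic.exists_potential (hG : G.IsAcyclic) (f : V → V → A)
    (hf : ∀ v w, G.Adj v w → f w v = -f v w) :
    ∃ h : V → A, ∀ v w, G.Adj v w → f v w = h w - h v := by
  classical
  let root : V → V := fun v => (G.connectedComponentMk v).out
  have hreach : ∀ v, G.Reachable (root v) v := fun v =>
    ConnectedComponent.exact (Quot.out_eq _)
  choose P hP using fun v => (hreach v).exists_isPath
  refine ⟨fun v => (P v).dartSum f, fun v w hvw => ?_⟩
  have hroot : root w = root v := by
    simp only [root, ConnectedComponent.sound hvw.reachable]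
  set q := (P w).copy hroot rfl
  have hq : q.IsPath := by simpa [q] using hP w
  have hqsum : q.dartSum f = (P w).dartSum f := Walk.dartSum_copy _ _ _ _
  show f v w = (P w).dartSum f - (P v).dartSum f
  by_cases hw : w ∈ (P v).support
  · rw [hG.path_concat hq (hP v) hvw.symm hw, Walk.dartSum_concat, ← hqsum, hf v w hvw]
    abel
  · have hv := hG.mem_support_of_ne_mem_support_of_adj_of_isPath hq (hP v) hvw.symm hw
    rw [← hqsum, hG.path_concat (hP v) hq hvw hv, Walk.dartSum_concat]
    abel

end SimpleGraph

section Mutation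

variable {V : Type*}

lemma Matrix.apply_swap_of_transpose_eq_neg {α : Type*} [Neg α] {M : Matrix V V α}
    (hM : Mᵀ = -M) (i j : V) : M j i = -M i j :=
  congr_fun₂ hM i j

lemma underlying_adj_iff {M : Matrix V V ℤ} (hM : Mᵀ = -M) {i j : V} :
    (underlying M).Adj i j ↔ M i j ≠ 0 := by
  have hij := apply_swap_of_transpose_eq_neg hM i j
  have hii := apply_swap_of_transpose_eq_neg hM i i
  simp only [underlying, SimpleGraph.fromRel_adj]
  constructor
  · rintro ⟨-, h | h⟩ <;> omega
  · intro h
    exact ⟨by rintro rfl; omega, Or.inl h⟩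

variable [DecidableEq V]

def IsSinkOrSource (M : Matrix V V ℤ) (k : V) : Prop :=
  (∀ i, 0 ≤ M i k) ∨ ∀ i, M i k ≤ 0

def IsSinkSourceSequence (M : Matrix V V ℤ) (l : List V) : Prop :=
  ∀ (pre : List V) (k : V) (post : List V), l = pre ++ k :: post →
    IsSinkOrSource (pre.foldl mutate M) k

lemma IsSinkSourceSequence.nil (M : Matrix V V ℤ) : IsSinkSourceSequence M [] := by
  intro pre k post h
  simp at h

lemma IsSinkSourceSequence.cons {M : Matrix V V ℤ} {k : V} {l : List V}
    (hk : IsSinkOrSource M k) (hl : IsSinkSourceSequence (mutate M k) l) :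
    IsSinkSourceSequence M (k :: l) := by
  rintro (_ | ⟨k', pre⟩) k'' post h <;> simp only [List.nil_append, List.cons_append,
    List.cons.injEq] at h
  · obtain ⟨rfl, -⟩ := h
    exact hk
  · obtain ⟨rfl, h⟩ := h
    exact hl pre k'' post h

/-- At a sink or a source there are no paths of length two through `k`, so mutation only
reverses the arrows at `k`. -/
lemma mutate_apply_of_isSinkOrSource {M : Matrix V V ℤ} (hM : Mᵀ = -M) {k : V}
    (hk : IsSinkOrSource M k) (i j : V) :
    mutate M k i j = if i = k ∨ j = k then -M i j else M i j := by
  have hkj := apply_swap_of_transpose_eq_neg hM j k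
  have hpath : M i k * M k j ≤ 0 := by
    rcases hk with hk | hk
    · nlinarith [hk i, hk j]
    · nlinarith [hk i, hk j]
  simp only [mutate, of_apply]
  split_ifs <;> simp [hpath]

lemma underlying_mutate_of_isSinkOrSource {M : Matrix V V ℤ} (hM : Mᵀ = -M) {k : V}
    (hk : IsSinkOrSource M k) : underlying (mutate M k) = underlying M := by
  ext i j
  simp only [underlying, SimpleGraph.fromRel_adj, mutate_apply_of_isSinkOrSource hM hk]
  split_ifs <;> simp

end Mutation

section Height

variable {V : Type*} (G : SimpleGraph V)

def IsUnitHeight (h : V → ℤ) : Prop :=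
  ∀ ⦃i j⦄, G.Adj i j → h j = h i + 1 ∨ h i = h j + 1

variable {G}

lemma IsUnitHeight.update_add_two [DecidableEq V] {h : V → ℤ} (hh : IsUnitHeight G h) {u : V}
    (hu : ∀ i, G.Adj u i → h i = h u + 1) :
    IsUnitHeight G (Function.update h u (h u + 2)) := by
  intro i j hij
  rcases eq_or_ne i u with rfl | hi
  · simp [hij.ne', hu j hij, add_assoc]
  rcases eq_or_ne j u with rfl | hj
  · simp [hij.ne, hu i hij.symm, add_assoc]
  simpa [hi, hj] using hh hij

/-- Take `u` of minimal height among the vertices where `e` is maximal: a neighbour one step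
lower would violate the unit condition on `h + 2 e`. -/
lemma IsUnitHeight.exists_source_of_offset_ne_zero [Finite V] {h : V → ℤ} {e : V → ℕ}
    (hh : IsUnitHeight G h) (he : IsUnitHeight G fun v => h v + 2 * e v) (hne : ∃ v, e v ≠ 0) :
    ∃ u, 0 < e u ∧ ∀ i, G.Adj u i → h i = h u + 1 := by
  obtain ⟨v, hv⟩ := hne
  have : Nonempty V := ⟨v⟩
  obtain ⟨u, hu⟩ := Finite.exists_min fun w => toLex (-(e w : ℤ), h w)
  simp only [Prod.Lex.toLex_le_toLex] at hu
  refine ⟨u, by have := hu v; omega, fun i hi => ?_⟩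
  have hlex := hu i
  have hstep := hh hi
  have hstep' : h i + 2 * e i = h u + 2 * e u + 1 ∨ h u + 2 * e u = h i + 2 * e i + 1 := he hi
  omega

variable (G) [DecidableRel G.Adj]

def quiverOfHeight (h : V → ℤ) : Matrix V V ℤ :=
  Matrix.of fun i j => if G.Adj i j then h j - h i else 0

variable {G}

lemma quiverOfHeight_transpose (h : V → ℤ) : (quiverOfHeight G h)ᵀ = -quiverOfHeight G h := by
  ext i j
  simp only [quiverOfHeight, transpose_apply, neg_apply, of_apply, G.adj_comm j i]
  split_ifs <;> ring

lemma isSinkOrSource_quiverOfHeight {h : V → ℤ} {u : V}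
    (hu : ∀ i, G.Adj u i → h i = h u + 1) :
    IsSinkOrSource (quiverOfHeight G h) u := by
  refine Or.inr fun i => ?_
  simp only [quiverOfHeight, of_apply]
  split_ifs with hiu
  · linarith [hu i hiu.symm]
  · rfl

lemma mutate_quiverOfHeight [DecidableEq V] {h : V → ℤ} {u : V}
    (hu : ∀ i, G.Adj u i → h i = h u + 1) :
    mutate (quiverOfHeight G h) u = quiverOfHeight G (Function.update h u (h u + 2)) := by
  ext i j
  rw [mutate_apply_of_isSinkOrSource (quiverOfHeight_transpose h)
    (isSinkOrSource_quiverOfHeight hu)]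
  simp only [quiverOfHeight, of_apply, Function.update_apply]
  grind [G.adj_comm, G.loopless.irrefl]

end Height

section Descent

variable {V : Type*} [Fintype V] [DecidableEq V] {G : SimpleGraph V} [DecidableRel G.Adj]

/-- Mutating at a source raises the height there by two, so `∑ e` drops by one. -/
theorem exists_isSinkSourceSequence_quiverOfHeight {h : V → ℤ} {e : V → ℕ}
    (hh : IsUnitHeight G h) (he : IsUnitHeight G fun v => h v + 2 * e v) :
    ∃ l : List V, IsSinkSourceSequence (quiverOfHeight G h) l ∧
      l.foldl mutate (quiverOfHeight G h) = quiverOfHeight G fun v => h v + 2 * e v := by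
  obtain ⟨n, hn⟩ : ∃ n, ∑ v, e v = n := ⟨_, rfl⟩
  induction n generalizing h e with
  | zero =>
    have he0 : ∀ v, e v = 0 := fun v => Finset.sum_eq_zero_iff.mp hn v (Finset.mem_univ v)
    exact ⟨[], .nil _, by simp [he0]⟩
  | succ n ih =>
    obtain ⟨v, -, hv⟩ := Finset.exists_ne_zero_of_sum_ne_zero (s := .univ) (f := e) (by omega)
    obtain ⟨u, heu, hu⟩ := hh.exists_source_of_offset_ne_zero he ⟨v, hv⟩
    set h' := Function.update h u (h u + 2)
    set e' := Function.update e u (e u - 1)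
    have hsame : (fun v => h' v + 2 * e' v) = fun v => h v + 2 * e v := by
      funext v
      rcases eq_or_ne v u with rfl | hv
      · simp [h', e']
        omega
      · simp [h', e', hv]
    have hn' : ∑ v, e' v = n := by
      have hrest : ∑ v ∈ Finset.univ.erase u, e' v = ∑ v ∈ Finset.univ.erase u, e v :=
        Finset.sum_congr rfl fun v hv => Function.update_of_ne (Finset.ne_of_mem_erase hv) _ _
      have hu' : e' u = e u - 1 := Function.update_self ..
      rw [← Finset.add_sum_erase _ _ (Finset.mem_univ u)] at hn ⊢
      omega
    obtain ⟨l, hl, hfold⟩ := ih (hh.update_add_two hu) (hsame ▸ he) hn'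
    refine ⟨u :: l, .cons ?_ ?_, ?_⟩
    · exact isSinkOrSource_quiverOfHeight hu
    · rwa [mutate_quiverOfHeight hu]
    · rw [List.foldl_cons, mutate_quiverOfHeight hu, hfold, hsame]

end Descent

section Orientation

variable {V : Type*}

theorem exists_eq_quiverOfHeight {M : Matrix V V ℤ} (hM : Mᵀ = -M)
    (hsimple : ∀ i j, M i j ∈ ({-1, 0, 1} : Set ℤ)) (hacyc : (underlying M).IsAcyclic)
    [DecidableRel (underlying M).Adj] :
    ∃ h, IsUnitHeight (underlying M) h ∧ M = quiverOfHeight (underlying M) h := by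
  obtain ⟨h, hpot⟩ := hacyc.exists_potential (fun i j => M i j) fun i j _ =>
    apply_swap_of_transpose_eq_neg hM i j
  refine ⟨h, fun i j hij => ?_, ?_⟩
  · have hne := (underlying_adj_iff hM).mp hij
    have hM := hsimple i j
    have hpot := hpot i j hij
    simp only [Set.mem_insert_iff, Set.mem_singleton_iff] at hM
    omega
  · ext i j
    simp only [quiverOfHeight, of_apply]
    split_ifs with hij
    · exact hpot i j hij
    · simpa [underlying_adj_iff hM] using hij

variable [Finite V] {G : SimpleGraph V} [DecidableRel G.Adj]

/-- Two unit heights of the same forest differ by an even function on each edge; shifted to be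
nonnegative, half of it is the offset `e`. -/
theorem SimpleGraph.IsAcyclic.exists_quiverOfHeight_eq (hG : G.IsAcyclic) {h g : V → ℤ}
    (hh : IsUnitHeight G h) (hg : IsUnitHeight G g) :
    ∃ e : V → ℕ, IsUnitHeight G (fun v => h v + 2 * e v) ∧
      quiverOfHeight G g = quiverOfHeight G fun v => h v + 2 * e v := by
  obtain ⟨d, hd⟩ := hG.exists_potential (fun i j => (g j - g i - (h j - h i)) / 2)
    fun i j hij => by
      have := hh hij
      have := hg hij
      omega
  rcases isEmpty_or_nonempty V with hV | hV
  · exact ⟨0, fun i => isEmptyElim i, Subsingleton.elim _ _⟩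
  obtain ⟨m, hm⟩ := Finite.exists_min d
  have hdiff : ∀ i j, G.Adj i j →
      g j - g i = h j + 2 * (d j - d m).toNat - (h i + 2 * (d i - d m).toNat) := by
    intro i j hij
    have hdij : (g j - g i - (h j - h i)) / 2 = d j - d i := hd i j hij
    have := hh hij
    have := hg hij
    have := hm i
    have := hm j
    omega
  refine ⟨fun v => (d v - d m).toNat, fun i j hij => ?_, ?_⟩
  · have := hdiff i j hij
    have := hg hij
    dsimp only
    omega
  · ext i j
    simp only [quiverOfHeight, of_apply]
    split_ifs with hij
    · exact hdiff i j hij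
    · rfl

end Orientation

theorem tree_quiver_mutation {V : Type*} [Fintype V] [DecidableEq V]
    (B : Matrix V V ℤ) (hskew : Bᵀ = -B)
    (hsimple : ∀ i j, B i j ∈ ({-1, 0, 1} : Set ℤ))
    (htree : (underlying B).IsTree) :
    (∀ v : V, ((∀ i, 0 ≤ B i v) ∨ (∀ i, B i v ≤ 0)) →
      underlying (mutate B v) = underlying B ∧
      ∀ i j, mutate B v i j = if i = v ∨ j = v then -B i j else B i j) ∧
    (∀ B' : Matrix V V ℤ, B'ᵀ = -B' →
      (∀ i j, B' i j ∈ ({-1, 0, 1} : Set ℤ)) →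
      underlying B' = underlying B →
      ∃ l : List V, l.foldl mutate B = B' ∧
        ∀ (pre : List V) (k : V) (post : List V), l = pre ++ k :: post →
          ((∀ i, 0 ≤ (pre.foldl mutate B) i k) ∨ (∀ i, (pre.foldl mutate B) i k ≤ 0))) := by
  refine ⟨fun v hv => ⟨underlying_mutate_of_isSinkOrSource hskew hv,
    mutate_apply_of_isSinkOrSource hskew hv⟩, fun B' hskew' hsimple' hund => ?_⟩
  classical
  obtain ⟨h, hh, hB⟩ := exists_eq_quiverOfHeight hskew hsimple htree.isAcyclic
  obtain ⟨g, hg, hB'⟩ := exists_eq_quiverOfHeight hskew' hsimple' (hund ▸ htree.isAcyclic)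
  rw [hund] at hg hB'
  obtain ⟨e, he, hge⟩ := htree.isAcyclic.exists_quiverOfHeight_eq hh hg
  obtain ⟨l, hl, hfold⟩ := exists_isSinkSourceSequence_quiverOfHeight hh he
  refine ⟨l, ?_, ?_⟩
  · rw [hB, hfold, hB', hge]
  · rw [hB]
    exact hl
end

section
/- The type-A conditions are preserved under mutation at a vertex of degree 1: if a quiver Q satisfies the type-A characterization conditions and v is a vertex of degree 1, then the quiver μ_v(Q) obtained by mutating at v also satisfies the type-A conditions. -/
open Matrix

def oriented3 {V : Type*} (B : Matrix V V ℤ) (a b c : V) : Prop :=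
  B a b = 1 ∧ B b c = 1 ∧ B c a = 1

instance {V : Type*} (B : Matrix V V ℤ) (a b c : V) : Decidable (oriented3 B a b c) :=
  inferInstanceAs (Decidable (_ ∧ _ ∧ _))

def deg {V : Type*} [Fintype V] [DecidableEq V] (B : Matrix V V ℤ) (v : V) : ℕ :=
  (Finset.univ.filter fun u => u ≠ v ∧ B v u ≠ 0).card

def edgeInTriangle {V : Type*} (B : Matrix V V ℤ) (a b : V) : Prop :=
  ∃ u, oriented3 B a b u ∨ oriented3 B b a u

def TypeA {V : Type*} [Fintype V] [DecidableEq V] (B : Matrix V V ℤ) : Prop :=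
  Bᵀ = -B ∧
  (∀ i j, B i j ∈ ({-1, 0, 1} : Set ℤ)) ∧
  (∀ (v : V) (w : (underlying B).Walk v v), w.IsCycle →
    w.length = 3 ∧ ∃ a b c, oriented3 B a b c ∧ w.support.toFinset = {a, b, c}) ∧
  (∀ v, deg B v ≤ 4) ∧
  (∀ v, deg B v = 4 → ∃ x y z w,
      ({x, y, z, w} : Finset V) = Finset.univ.filter (fun u => u ≠ v ∧ B v u ≠ 0) ∧
      oriented3 B v x y ∧ oriented3 B v z w ∧
      x ≠ z ∧ x ≠ w ∧ y ≠ z ∧ y ≠ w) ∧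
  (∀ v, deg B v = 3 → ∃ x y z,
      ({x, y, z} : Finset V) = Finset.univ.filter (fun u => u ≠ v ∧ B v u ≠ 0) ∧
      oriented3 B v x y ∧ ¬ edgeInTriangle B v z)

theorem typeA_preserved_by_leaf_mutation {V : Type*} [Fintype V] [DecidableEq V]
    (B : Matrix V V ℤ) (hA : TypeA B) (v : V) (hdeg : deg B v = 1) :
    TypeA (mutate B v) := by
  obtain ⟨hskewT, hrange, hcyc, hdeg4, hd4, hd3⟩ := hA
  have hskew : ∀ i j, B j i = -B i j := by
    intro i j
    have h := congrFun (congrFun hskewT j) i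
    simp only [Matrix.transpose_apply, Matrix.neg_apply] at h
    omega
  have hdiag : ∀ i, B i i = 0 := by
    intro i; have := hskew i i; omega
  -- uniqueness of the neighbor of v
  have huniq : ∀ a b, a ≠ v → B v a ≠ 0 → b ≠ v → B v b ≠ 0 → a = b := by
    intro a b ha hBa hb hBb
    have hcard : (Finset.univ.filter fun u => u ≠ v ∧ B v u ≠ 0).card ≤ 1 := hdeg.le
    have hle := Finset.card_le_one.mp hcard
    exact hle a (by simp [ha, hBa]) b (by simp [hb, hBb])
  -- explicit formula for the mutated matrix
  have hmut : ∀ i j, mutate B v i j = if i = v ∨ j = v then -B i j else B i j := by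
    intro i j
    unfold mutate
    simp only [Matrix.of_apply]
    split
    · rfl
    · rename_i h
      push_neg at h
      obtain ⟨hi, hj⟩ := h
      rcases eq_or_ne (B i v) 0 with h0 | h0
      · simp [h0]
      rcases eq_or_ne (B v j) 0 with h1 | h1
      · simp [h1]
      · have hBvi : B v i ≠ 0 := by rw [hskew]; omega
        have hij : i = j := huniq i j hi hBvi hj h1
        subst hij
        have hneg : B i v * B v i ≤ 0 := by
          rw [hskew]; nlinarith [sq_nonneg (B v i)]
        rw [max_eq_right hneg, mul_zero, add_zero]
  have hpat : ∀ i j, mutate B v i j ≠ 0 ↔ B i j ≠ 0 := by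
    intro i j
    rw [hmut]
    split <;> simp
  -- no triangle (in zero-pattern) touches v
  have nov : ∀ a b c : V, B a b ≠ 0 → B b c ≠ 0 → B c a ≠ 0 →
      a ≠ v ∧ b ≠ v ∧ c ≠ v := by
    intro a b c h1 h2 h3
    have hab : a ≠ b := fun h => h1 (h ▸ hdiag a)
    have hbc : b ≠ c := fun h => h2 (h ▸ hdiag b)
    have hca : c ≠ a := fun h => h3 (h ▸ hdiag c)
    refine ⟨?_, ?_, ?_⟩
    · rintro rfl
      have hbv : b ≠ a := hab.symm
      have hcv : c ≠ a := hca
      have hBc : B a c ≠ 0 := by rw [← neg_ne_zero, ← hskew]; exact h3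
      exact hbc (huniq b c hbv h1 hcv hBc)
    · rintro rfl
      have hBa : B b a ≠ 0 := by rw [← neg_ne_zero, ← hskew]; exact h1
      exact (Ne.symm hca) (huniq a c hab hBa hbc.symm h2)
    · rintro rfl
      have hBb : B c b ≠ 0 := by rw [← neg_ne_zero, ← hskew]; exact h2
      exact hab (huniq a b hca.symm h3 hbc hBb)
  have horient : ∀ a b c, oriented3 (mutate B v) a b c ↔ oriented3 B a b c := by
    intro a b c
    constructor
    · rintro ⟨h1, h2, h3⟩
      have p1 : B a b ≠ 0 := (hpat a b).mp (by omega)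
      have p2 : B b c ≠ 0 := (hpat b c).mp (by omega)
      have p3 : B c a ≠ 0 := (hpat c a).mp (by omega)
      obtain ⟨ha, hb, hc⟩ := nov a b c p1 p2 p3
      rw [hmut, if_neg (by tauto)] at h1
      rw [hmut, if_neg (by tauto)] at h2
      rw [hmut, if_neg (by tauto)] at h3
      exact ⟨h1, h2, h3⟩
    · rintro ⟨h1, h2, h3⟩
      obtain ⟨ha, hb, hc⟩ := nov a b c (by omega) (by omega) (by omega)
      refine ⟨?_, ?_, ?_⟩ <;> rw [hmut, if_neg (by tauto)] <;> assumption
  have hET : ∀ a b, edgeInTriangle (mutate B v) a b ↔ edgeInTriangle B a b := by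
    intro a b
    unfold edgeInTriangle
    simp only [horient]
  have hfilt : ∀ w : V, (Finset.univ.filter fun u => u ≠ w ∧ mutate B v w u ≠ 0)
      = (Finset.univ.filter fun u => u ≠ w ∧ B w u ≠ 0) := by
    intro w
    apply Finset.filter_congr
    intro u _
    rw [hpat]
  have hdegEq : ∀ w, deg (mutate B v) w = deg B w := by
    intro w
    unfold deg
    rw [hfilt]
  have hU : underlying (mutate B v) = underlying B := by
    ext a b
    simp only [underlying, SimpleGraph.fromRel_adj, hpat]
  refine ⟨?_, ?_, ?_, ?_, ?_, ?_⟩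
  · ext i j
    simp only [Matrix.transpose_apply, Matrix.neg_apply, hmut]
    have := hskew i j
    by_cases h : i = v ∨ j = v
    · rw [if_pos (by tauto), if_pos h]; omega
    · rw [if_neg (by tauto), if_neg h]; omega
  · intro i j
    have := hrange i j
    simp only [Set.mem_insert_iff, Set.mem_singleton_iff] at this ⊢
    rw [hmut]
    split <;> omega
  · rw [hU]
    intro v' w hw
    obtain ⟨hl, a, b, c, ho, hs⟩ := hcyc v' w hw
    exact ⟨hl, a, b, c, (horient a b c).mpr ho, hs⟩
  · intro w
    rw [hdegEq]
    exact hdeg4 w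
  · intro w hw
    rw [hdegEq] at hw
    obtain ⟨x, y, z, t, hset, ho1, ho2, h1, h2, h3, h4⟩ := hd4 w hw
    refine ⟨x, y, z, t, ?_, (horient _ _ _).mpr ho1, (horient _ _ _).mpr ho2,
      h1, h2, h3, h4⟩
    rw [hfilt w]
    exact hset
  · intro w hw
    rw [hdegEq] at hw
    obtain ⟨x, y, z, hset, ho1, hnt⟩ := hd3 w hw
    refine ⟨x, y, z, ?_, (horient _ _ _).mpr ho1, ?_⟩
    · rw [hfilt w]; exact hset
    · rw [hET]; exact hnt
end
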